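/- arXiv:2409.03129 — 2 statements merged into one kernel-verified Lean document; each statement's English description precedes it below -/
import Mathlib

section
/- In the two-agent series component maintenance game with (1−p1)·p2 ≤ C1 ≤ 1−p1 and (1−p2)·p1 ≤ C2 ≤ 1−p2, if agent 1 is given a repair subsidy s1 > C1 − (1−p1)·p2 (so agent 1's effective repair cost becomes C1 − s1 < (1−p1)·p2), then (DN,DN) is no longer a Nash equilibrium and (RE,RE) remains a Nash equilibrium of the subsidized game. -/
noncomputable def q (p : ℝ) (s : Bool) : ℝ := if s then 1 else p

/-- Agent 1's cost in the subsidized game: repair cost is `C1 - σ1`. -/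
noncomputable def cost1 (C1 σ1 p1 p2 : ℝ) (s1 s2 : Bool) : ℝ :=
  (C1 - σ1) * (if s1 then 1 else 0) + 1 - q p1 s1 * q p2 s2

noncomputable def cost2 (C2 p1 p2 : ℝ) (s1 s2 : Bool) : ℝ :=
  C2 * (if s2 then 1 else 0) + 1 - q p1 s1 * q p2 s2

/-- Pure Nash equilibrium of the game where agent 1 receives repair subsidy `σ1`. -/
def isNE (C1 C2 σ1 p1 p2 : ℝ) (s1 s2 : Bool) : Prop :=
  (∀ a : Bool, cost1 C1 σ1 p1 p2 s1 s2 ≤ cost1 C1 σ1 p1 p2 a s2) ∧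
  (∀ a : Bool, cost2 C2 p1 p2 s1 s2 ≤ cost2 C2 p1 p2 s1 a)

/-- If `(1-p1)p2 ≤ C1 ≤ 1-p1`, `(1-p2)p1 ≤ C2 ≤ 1-p2`, and agent 1 gets a repair
subsidy `σ1 > C1 - (1-p1)p2`, then (DN,DN) is no longer a Nash equilibrium of the
subsidized game while (RE,RE) remains one. -/
theorem stmt_5 (p1 p2 C1 C2 σ1 : ℝ)
    (hp1 : 0 < p1) (hp1' : p1 < 1) (hp2 : 0 < p2) (hp2' : p2 < 1)
    (hC1pos : 0 < C1) (hC2pos : 0 < C2)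
    (hC1lo : (1 - p1) * p2 ≤ C1) (hC1hi : C1 ≤ 1 - p1)
    (hC2lo : (1 - p2) * p1 ≤ C2) (hC2hi : C2 ≤ 1 - p2)
    (hσ1nonneg : 0 ≤ σ1) (hσ1 : C1 - (1 - p1) * p2 < σ1) :
    ¬ isNE C1 C2 σ1 p1 p2 false false ∧ isNE C1 C2 σ1 p1 p2 true true := by
  constructor
  · intro ⟨h1, _⟩
    have := h1 true
    norm_num [cost1, q] at this
    nlinarith
  · constructor
    · intro a
      cases a <;> norm_num [cost1, q] <;> nlinarith
    · intro a
      cases a <;> norm_num [cost2, q] <;> nlinarith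
end

section
/- In the cost-sharing game constructed from a set cover instance (U, S) with unit-cost sets, additional unit-cost singleton actions, and a grand action of cost n − ε shared by all n agents (0 < ε < 1), the minimum social cost over all joint actions equals k*, the size of a minimum set cover of (U, S), provided k* < n. -/
open Finset

/-- Actions: a covering set from `𝒮`, a private singleton action for each agent,
or the grand action available to all agents. -/
def Act {U : Type*} [DecidableEq U] (𝒮 : Finset (Finset U)) : Type _ :=
  {S // S ∈ 𝒮} ⊕ U ⊕ Unit

instance {U : Type*} [DecidableEq U] (𝒮 : Finset (Finset U)) : DecidableEq (Act 𝒮) := by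
  unfold Act; infer_instance

/-- The set of agents that may use a given action. -/
def avail {U : Type*} [DecidableEq U] {𝒮 : Finset (Finset U)} : Act 𝒮 → Set U
  | .inl S => ↑S.1
  | .inr (.inl u) => {u}
  | .inr (.inr _) => Set.univ

/-- Action costs: sets in `𝒮` and singleton actions cost 1; grand action costs `n - ε`. -/
noncomputable def acost {U : Type*} [DecidableEq U] {𝒮 : Finset (Finset U)}
    (n : ℕ) (ε : ℝ) : Act 𝒮 → ℝ
  | .inl _ => 1
  | .inr (.inl _) => 1
  | .inr (.inr _) => (n : ℝ) - ε

/-- Social cost of a joint action: sum of the costs of the distinct chosen actions. -/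
noncomputable def socialCost {U : Type*} [Fintype U] [DecidableEq U]
    {𝒮 : Finset (Finset U)} (n : ℕ) (ε : ℝ) (a : U → Act 𝒮) : ℝ :=
  ∑ act ∈ Finset.image a Finset.univ, acost n ε act

/-- In the cost-sharing game built from a set-cover instance, the minimum social
cost over feasible joint actions equals the minimum set-cover size `kstar`,
provided `kstar < n` and `0 < ε < 1`. -/
theorem stmt_10 {U : Type*} [Fintype U] [DecidableEq U]
    (n : ℕ) (hn : Fintype.card U = n)
    (𝒮 : Finset (Finset U)) (ε : ℝ) (hε0 : 0 < ε) (hε1 : ε < 1)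
    (kstar : ℕ)
    (hk : IsLeast {k | ∃ T ⊆ 𝒮, (∀ u : U, ∃ S ∈ T, u ∈ S) ∧ T.card = k} kstar)
    (hkn : kstar < n) :
    IsLeast {c : ℝ | ∃ a : U → Act 𝒮,
      (∀ u, u ∈ avail (a u)) ∧ socialCost n ε a = c} (kstar : ℝ) := by
  classical
  obtain ⟨⟨T, hT𝒮, hTcov, hTcard⟩, hleast⟩ := hk
  -- choice of a covering set containing each u
  have pickT : ∀ u : U, ∃ S, S ∈ T ∧ u ∈ S := by
    intro u; obtain ⟨S, hS, hu⟩ := hTcov u; exact ⟨S, hS, hu⟩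
  set pk : U → Finset U := fun u => (pickT u).choose with hpk
  have pk_mem : ∀ u, pk u ∈ T := fun u => (pickT u).choose_spec.1
  have pk_cov : ∀ u, u ∈ pk u := fun u => (pickT u).choose_spec.2
  -- the valuation map
  have val_def : ∀ _ : Unit, True := fun _ => trivial
  set val : Act 𝒮 → Finset U := fun act =>
    match act with
    | .inl S => S.1
    | .inr (.inl u) => pk u
    | .inr (.inr _) => ∅ with hval
  constructor
  · -- membership: the joint action using the min cover
    refine ⟨fun u => Sum.inl ⟨pk u, hT𝒮 (pk_mem u)⟩, fun u => pk_cov u, ?_⟩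
    set a : U → Act 𝒮 := fun u => Sum.inl ⟨pk u, hT𝒮 (pk_mem u)⟩ with ha
    set B : Finset (Act 𝒮) := Finset.image a Finset.univ with hB
    have hB1 : ∀ act ∈ B, acost n ε act = (1 : ℝ) := by
      intro act hact
      simp only [hB, Finset.mem_image] at hact
      obtain ⟨u, -, rfl⟩ := hact
      rfl
    have hcost : socialCost n ε a = (B.card : ℝ) := by
      unfold socialCost
      rw [Finset.sum_congr rfl hB1]
      simp
    -- injectivity of val on B
    have hinj : Set.InjOn val ↑B := by
      intro x hx y hy hxy
      simp only [hB, Finset.coe_image, Set.mem_image] at hx hy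
      obtain ⟨u, -, rfl⟩ := hx
      obtain ⟨v, -, rfl⟩ := hy
      simp only [ha, hval] at hxy ⊢
      exact congrArg _ (Subtype.ext hxy)
    have hcardval : (B.image val).card = B.card := Finset.card_image_of_injOn hinj
    -- B.image val is a cover contained in 𝒮
    have hsub : B.image val ⊆ 𝒮 := by
      intro S hS
      simp only [Finset.mem_image, hB] at hS
      obtain ⟨act, ⟨u, -, rfl⟩, rfl⟩ := hS
      exact hT𝒮 (pk_mem u)
    have hcov' : ∀ u : U, ∃ S ∈ B.image val, u ∈ S := by
      intro u
      refine ⟨pk u, ?_, pk_cov u⟩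
      exact Finset.mem_image.mpr ⟨a u, Finset.mem_image.mpr ⟨u, Finset.mem_univ u, rfl⟩, rfl⟩
    have hge : kstar ≤ (B.image val).card := hleast ⟨B.image val, hsub, hcov', rfl⟩
    have hle : (B.image val).card ≤ T.card := by
      apply Finset.card_le_card
      intro S hS
      simp only [Finset.mem_image, hB] at hS
      obtain ⟨act, ⟨u, -, rfl⟩, rfl⟩ := hS
      exact pk_mem u
    have : B.card = kstar := by omega
    rw [hcost, this]
  · -- lower bound
    rintro c ⟨a, hfeas, rfl⟩
    set B : Finset (Act 𝒮) := Finset.image a Finset.univ with hB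
    have hnonneg : ∀ act ∈ B, (0 : ℝ) ≤ acost n ε act := by
      intro act _
      match act with
      | .inl S => exact zero_le_one
      | .inr (.inl u) => exact zero_le_one
      | .inr (.inr _) =>
        show (0:ℝ) ≤ (n:ℝ) - ε
        have : (1:ℝ) ≤ (n:ℝ) := by exact_mod_cast Nat.one_le_iff_ne_zero.mpr (by omega)
        linarith
    by_cases hg : (Sum.inr (Sum.inr ()) : Act 𝒮) ∈ B
    · -- grand action used: cost ≥ n - ε > kstar
      have h1 : acost n ε (Sum.inr (Sum.inr ()) : Act 𝒮) ≤ socialCost n ε a :=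
        Finset.single_le_sum hnonneg hg
      have h2 : acost n ε (Sum.inr (Sum.inr ()) : Act 𝒮) = (n:ℝ) - ε := rfl
      have h3 : (kstar : ℝ) ≤ (n:ℝ) - 1 := by
        have : (kstar : ℝ) + 1 ≤ (n : ℝ) := by exact_mod_cast hkn
        linarith
      linarith
    · -- no grand action: cost = card B, and B induces a cover of size ≤ card B
      have hB1 : ∀ act ∈ B, acost n ε act = (1 : ℝ) := by
        intro act hact
        match act with
        | .inl S => rfl
        | .inr (.inl u) => rfl
        | .inr (.inr u) => exact absurd hact hg
      have hcost : socialCost n ε a = (B.card : ℝ) := by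
        unfold socialCost
        rw [Finset.sum_congr rfl hB1]
        simp
      have hsub : B.image val ⊆ 𝒮 := by
        intro S hS
        simp only [Finset.mem_image, hB] at hS
        obtain ⟨act, ⟨u, -, hau⟩, rfl⟩ := hS
        match act with
        | .inl S => exact S.2
        | .inr (.inl v) => exact hT𝒮 (pk_mem v)
        | .inr (.inr w) =>
          exact absurd (hB ▸ Finset.mem_image.mpr ⟨u, Finset.mem_univ u, hau⟩) hg
      have hcov' : ∀ u : U, ∃ S ∈ B.image val, u ∈ S := by
        intro u
        have hmem : a u ∈ B := Finset.mem_image.mpr ⟨u, Finset.mem_univ u, rfl⟩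
        have hfu := hfeas u
        refine ⟨val (a u), Finset.mem_image.mpr ⟨a u, hmem, rfl⟩, ?_⟩
        match hau : a u with
        | .inl S =>
          rw [hau] at hfu
          exact hfu
        | .inr (.inl v) =>
          rw [hau] at hfu
          have : u = v := hfu
          subst this
          exact pk_cov u
        | .inr (.inr w) =>
          rw [hau] at hmem
          exact absurd hmem hg
      have hge : kstar ≤ (B.image val).card := hleast ⟨B.image val, hsub, hcov', rfl⟩
      have hle : (B.image val).card ≤ B.card := Finset.card_image_le
      rw [hcost]
      exact_mod_cast le_trans hge hle
end
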